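/- arXiv:2603.23451 — 5 statements merged into one kernel-verified Lean document; each statement's English description precedes it below -/
import Mathlib

section
/- Let C be a smooth projective curve and M a line bundle on C with h^0(M)=2 such that |M| is base point free. Let L be a line bundle with h^0(L) ≥ 1, and let m ≥ 1. Then the kernel of the multiplication map φ_m : H^0(C,L) ⊗ S^m H^0(C,M) → H^0(C, L+mM) is naturally isomorphic to H^0(C, L−M)^{⊕m}. Explicitly, after choosing a basis s,t of H^0(C,M), the element of ker(φ_m) corresponding to (z_1,…,z_m) is z_1t⊗s^m + (z_2t−z_1s)⊗s^{m−1}t + … + (z_mt−z_{m−1}s)⊗st^{m−1} − z_ms⊗t^m. -/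
/-!
Peel off one coefficient at a time. In `∑ᵢ s^{m-i} tⁱ xᵢ = 0` every term but the first is a
multiple of `t`, so `s^m x₀` is divisible by `t`; since `s` and `t` have no common zeros this
forces `x₀ = t z₁` with `z₁` of one degree less. Replacing `x₁` by `x₁ + s z₁` and dividing the
relation by `t` leaves a relation of length `m - 1`, to which induction applies. Conversely the
sum of the coefficients `z_{i+1} t - zᵢ s` telescopes, and `z` is recovered from its
coefficients by cancelling `t` from left to right.
-/

open Finset

section Membership

variable {F R : Type*} [Semiring F] [Semiring R] [Module F R] (H : ℤ → Submodule F R) {s t : R}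

theorem pow_mul_mem_of_mul_mem (hs : ∀ n : ℤ, ∀ x ∈ H n, s * x ∈ H (n + 1))
    {n : ℤ} {a : R} (ha : a ∈ H n) (j : ℕ) : s ^ j * a ∈ H (n + j) := by
  induction j with
  | zero => simpa using ha
  | succ j ih =>
    rw [pow_succ', mul_assoc, Nat.cast_succ, ← add_assoc]
    exact hs _ _ ih

theorem exists_eq_mul_of_pow_mul_eq_mul
    (hs : ∀ n : ℤ, ∀ x ∈ H n, s * x ∈ H (n + 1))
    (hbpf : ∀ n : ℤ, ∀ y ∈ H n, ∀ z ∈ H n, s * y = t * z →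
      ∃ w ∈ H (n - 1), y = t * w ∧ z = s * w)
    {n : ℤ} {a : R} (ha : a ∈ H n) (k : ℕ) {b : R} (hb : b ∈ H (n + k))
    (h : s ^ (k + 1) * a = t * b) : ∃ w ∈ H (n - 1), a = t * w := by
  induction k generalizing b with
  | zero =>
    obtain ⟨w, hw, rfl, -⟩ := hbpf n a ha b (by simpa using hb) (by simpa using h)
    exact ⟨w, hw, rfl⟩
  | succ k ih =>
    have hsa : s ^ (k + 1) * a ∈ H (n + ↑(k + 1)) := pow_mul_mem_of_mul_mem H hs ha (k + 1)
    obtain ⟨w, hw, hsaw, -⟩ := hbpf _ _ hsa b hb (by rw [← h, pow_succ' s (k + 1), mul_assoc])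
    exact ih (by simpa [← add_assoc] using hw) hsaw

end Membership

section Algebra

variable {R : Type*} [CommRing R] (s t : R)

theorem sum_pow_mul_pow_mul_sub (m : ℕ) (z : ℕ → R) :
    ∑ i ∈ range (m + 1), s ^ (m - i) * t ^ i * (z (i + 1) * t - z i * s) =
      t ^ (m + 1) * z (m + 1) - s ^ (m + 1) * z 0 := by
  have hterm : ∀ i ∈ range (m + 1), s ^ (m - i) * t ^ i * (z (i + 1) * t - z i * s) =
      s ^ (m + 1 - (i + 1)) * t ^ (i + 1) * z (i + 1) - s ^ (m + 1 - i) * t ^ i * z i := by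
    intro i hi
    rw [Nat.add_sub_add_right, Nat.sub_add_comm (Nat.le_of_lt_succ (mem_range.mp hi)), pow_succ]
    ring
  rw [sum_congr rfl hterm, sum_range_sub (fun j => s ^ (m + 1 - j) * t ^ j * z j)]
  simp

theorem sum_pow_mul_pow_mul_eq_mul_sum_shift (m : ℕ) (x : ℕ → R) {w : R} (hx : x 0 = t * w) :
    ∑ i ∈ range (m + 2), s ^ (m + 1 - i) * t ^ i * x i =
      t * ∑ i ∈ range (m + 1), s ^ (m - i) * t ^ i * (x (i + 1) + if i = 0 then s * w else 0) := by
  simp only [mul_add, mul_ite, mul_zero, sum_add_distrib, sum_ite_eq', mem_range,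
    Nat.succ_pos, if_true, mul_sum]
  rw [sum_range_succ' (fun i => s ^ (m + 1 - i) * t ^ i * x i), hx]
  congr 1
  · refine sum_congr rfl fun i _ => ?_
    rw [Nat.add_sub_add_right, pow_succ]
    ring
  · simp only [Nat.sub_zero, pow_zero, pow_succ]
    ring

end Algebra

section PencilTrick

variable {F R : Type*} [Ring F] [CommRing R] [Module F R]
  (H : ℤ → Submodule F R) {s t : R}

theorem exists_eq_mul_of_sum_pow_mul_pow_mul_eq_zero
    (hs : ∀ n : ℤ, ∀ x ∈ H n, s * x ∈ H (n + 1))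
    (ht : ∀ n : ℤ, ∀ x ∈ H n, t * x ∈ H (n + 1))
    (hbpf : ∀ n : ℤ, ∀ y ∈ H n, ∀ z ∈ H n, s * y = t * z →
      ∃ w ∈ H (n - 1), y = t * w ∧ z = s * w)
    {n : ℤ} (m : ℕ) {x : ℕ → R} (hx : ∀ i, i ≤ m + 1 → x i ∈ H n)
    (h : ∑ i ∈ range (m + 2), s ^ (m + 1 - i) * t ^ i * x i = 0) :
    ∃ w ∈ H (n - 1), x 0 = t * w := by
  set b := -∑ i ∈ range (m + 1), s ^ (m - i) * t ^ i * x (i + 1)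
  have hb : b ∈ H (n + m) := by
    refine Submodule.neg_mem _ (Submodule.sum_mem _ fun i hi => ?_)
    have hi : i ≤ m := Nat.le_of_lt_succ (mem_range.mp hi)
    have := pow_mul_mem_of_mul_mem H hs (pow_mul_mem_of_mul_mem H ht (hx (i + 1) (by omega)) i)
      (m - i)
    rwa [← mul_assoc, Nat.cast_sub hi, add_add_sub_cancel] at this
  refine exists_eq_mul_of_pow_mul_eq_mul H hs hbpf (hx 0 (Nat.zero_le _)) m hb ?_
  rw [sum_range_succ'] at h
  simp only [mul_neg, mul_sum, b]
  rw [← sub_eq_zero, sub_neg_eq_add, ← h, add_comm]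
  congr 1
  · refine sum_congr rfl fun i _ => ?_
    rw [Nat.add_sub_add_right]
    ring
  · simp

theorem exists_coeffs_of_sum_pow_mul_pow_mul_eq_zero [IsDomain R] (ht0 : t ≠ 0)
    (hs : ∀ n : ℤ, ∀ x ∈ H n, s * x ∈ H (n + 1))
    (ht : ∀ n : ℤ, ∀ x ∈ H n, t * x ∈ H (n + 1))
    (hbpf : ∀ n : ℤ, ∀ y ∈ H n, ∀ z ∈ H n, s * y = t * z →
      ∃ w ∈ H (n - 1), y = t * w ∧ z = s * w)
    {n : ℤ} (m : ℕ) {x : ℕ → R} (hx : ∀ i, i ≤ m → x i ∈ H n)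
    (h : ∑ i ∈ range (m + 1), s ^ (m - i) * t ^ i * x i = 0) :
    ∃ z : ℕ → R, z 0 = 0 ∧ z (m + 1) = 0 ∧ (∀ j, 1 ≤ j → j ≤ m → z j ∈ H (n - 1)) ∧
      ∀ i, i ≤ m → x i = z (i + 1) * t - z i * s := by
  induction m generalizing x with
  | zero =>
    refine ⟨0, rfl, rfl, fun j h₁ h₂ => by omega, fun i hi => ?_⟩
    obtain rfl : i = 0 := Nat.le_zero.mp hi
    simpa using h
  | succ m ih =>
    obtain ⟨w, hw, hx0⟩ := exists_eq_mul_of_sum_pow_mul_pow_mul_eq_zero H hs ht hbpf m hx h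
    set x' : ℕ → R := fun i => x (i + 1) + if i = 0 then s * w else 0
    have hx' : ∀ i, i ≤ m → x' i ∈ H n := fun i hi => by
      refine Submodule.add_mem _ (hx (i + 1) (by omega)) ?_
      split_ifs
      · simpa using hs _ w hw
      · exact Submodule.zero_mem _
    have h' : ∑ i ∈ range (m + 1), s ^ (m - i) * t ^ i * x' i = 0 := by
      rw [sum_pow_mul_pow_mul_eq_mul_sum_shift s t m x hx0] at h
      exact (mul_eq_zero.mp h).resolve_left ht0
    obtain ⟨z', hz'0, hz'm, hz'mem, hz'x⟩ := ih hx' h'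
    refine ⟨fun j => if j = 1 then w else z' (j - 1), by simpa using hz'0, by simpa using hz'm,
      fun j h₁ h₂ => ?_, fun i hi => ?_⟩
    · dsimp only
      split_ifs with hj
      · exact hw
      · exact hz'mem (j - 1) (by omega) (by omega)
    · rcases i with _ | _ | i
      · simp [hx0, hz'0, mul_comm]
      · have := hz'x 0 (Nat.zero_le _)
        simp only [x', zero_add, if_pos, hz'0, zero_mul, sub_zero] at this
        simp only [Nat.reduceAdd, Nat.reduceEqDiff, if_false, if_true, Nat.add_one_sub_one]
        linear_combination this
      · have := hz'x (i + 1) (by omega)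
        simp only [x', Nat.add_one_ne_zero, if_false, add_zero] at this
        simpa using this

end PencilTrick

theorem eq_of_forall_mul_sub_mul_eq {R : Type*} [CommRing R] [IsDomain R] {s t : R}
    (ht0 : t ≠ 0) {m : ℕ} {z z' : ℕ → R} (h0 : z 0 = z' 0)
    (h : ∀ i, i ≤ m → z (i + 1) * t - z i * s = z' (i + 1) * t - z' i * s) :
    ∀ j, j ≤ m + 1 → z j = z' j := by
  intro j
  induction j with
  | zero => exact fun _ => h0
  | succ j ih =>
    intro hj
    have hprev := ih (by omega)
    refine mul_right_cancel₀ ht0 ?_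
    linear_combination h j (by omega) + s * hprev

theorem stmt1_general (F R : Type*) [Field F] [CommRing R] [IsDomain R] [Algebra F R]
    (H : ℤ → Submodule F R)
    (s t : R) (hli : LinearIndependent F ![s, t])
    (hs : ∀ n : ℤ, ∀ x ∈ H n, s * x ∈ H (n + 1))
    (ht : ∀ n : ℤ, ∀ x ∈ H n, t * x ∈ H (n + 1))
    (hbpf : ∀ n : ℤ, ∀ y ∈ H n, ∀ z ∈ H n, s * y = t * z →
      ∃ w ∈ H (n - 1), y = t * w ∧ z = s * w)
    (m : ℕ) :
    (∀ x : ℕ → R, (∀ i, i ≤ m → x i ∈ H 0) →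
      ((∑ i ∈ Finset.range (m + 1), s ^ (m - i) * t ^ i * x i = 0) ↔
        ∃ z : ℕ → R, z 0 = 0 ∧ z (m + 1) = 0 ∧
          (∀ j, 1 ≤ j → j ≤ m → z j ∈ H (-1)) ∧
          ∀ i, i ≤ m → x i = z (i + 1) * t - z i * s)) ∧
    (∀ z z' : ℕ → R, z 0 = 0 → z' 0 = 0 → z (m + 1) = 0 → z' (m + 1) = 0 →
      (∀ j, 1 ≤ j → j ≤ m → z j ∈ H (-1)) →
      (∀ j, 1 ≤ j → j ≤ m → z' j ∈ H (-1)) →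
      (∀ i, i ≤ m → z (i + 1) * t - z i * s = z' (i + 1) * t - z' i * s) →
      ∀ j, j ≤ m + 1 → z j = z' j) := by
  have ht0 : t ≠ 0 := by simpa using hli.ne_zero 1
  refine ⟨fun x hx => ⟨fun h => ?_, ?_⟩,
    fun z z' hz0 hz'0 _ _ _ _ h => eq_of_forall_mul_sub_mul_eq ht0 (hz0.trans hz'0.symm) h⟩
  · simpa using exists_coeffs_of_sum_pow_mul_pow_mul_eq_zero H ht0 hs ht hbpf m hx h
  · rintro ⟨z, hz0, hzm, -, hzx⟩
    rw [sum_congr rfl fun i hi => by rw [hzx i (Nat.le_of_lt_succ (mem_range.mp hi))],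
      sum_pow_mul_pow_mul_sub, hz0, hzm]
    simp

/-- Lemma 1: extended base point free pencil trick.  Model: the section
spaces `H n = H⁰(C, L + nM)` are `F`-subspaces of the integral section ring `R`;
`s, t` is a basis of the 2-dimensional `H⁰(M)` and base point freeness of `|M|`
(`Z(s) ∩ Z(t) = ∅`) is recorded by the divisibility property `hbpf`.  Writing, after the
choice of basis `s, t`, an element of `H⁰(L) ⊗ Sᵐ H⁰(M)` as `∑ᵢ xᵢ ⊗ s^{m-i} t^i`, the
kernel of `φ_m : H⁰(L) ⊗ Sᵐ H⁰(M) → H⁰(L + mM)` consists exactly of the elements with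
`xᵢ = z_{i+1} t - zᵢ s` for some `z₁, …, z_m ∈ H⁰(L - M)` (with `z₀ = z_{m+1} = 0`), and the
`(z₁, …, z_m)` are uniquely determined, so `ker φ_m ≅ H⁰(L - M)^{⊕ m}`. -/
theorem stmt1 (F R : Type*) [Field F] [CommRing R] [IsDomain R] [Algebra F R]
    (H : ℤ → Submodule F R)
    (s t : R) (hli : LinearIndependent F ![s, t])
    (hs : ∀ n : ℤ, ∀ x ∈ H n, s * x ∈ H (n + 1))
    (ht : ∀ n : ℤ, ∀ x ∈ H n, t * x ∈ H (n + 1))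
    (hbpf : ∀ n : ℤ, ∀ y ∈ H n, ∀ z ∈ H n, s * y = t * z →
      ∃ w ∈ H (n - 1), y = t * w ∧ z = s * w)
    (hL : H 0 ≠ ⊥)
    (m : ℕ) (hm : 1 ≤ m) :
    (∀ x : ℕ → R, (∀ i, i ≤ m → x i ∈ H 0) →
      ((∑ i ∈ Finset.range (m + 1), s ^ (m - i) * t ^ i * x i = 0) ↔
        ∃ z : ℕ → R, z 0 = 0 ∧ z (m + 1) = 0 ∧
          (∀ j, 1 ≤ j → j ≤ m → z j ∈ H (-1)) ∧
          ∀ i, i ≤ m → x i = z (i + 1) * t - z i * s)) ∧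
    (∀ z z' : ℕ → R, z 0 = 0 → z' 0 = 0 → z (m + 1) = 0 → z' (m + 1) = 0 →
      (∀ j, 1 ≤ j → j ≤ m → z j ∈ H (-1)) →
      (∀ j, 1 ≤ j → j ≤ m → z' j ∈ H (-1)) →
      (∀ i, i ≤ m → z (i + 1) * t - z i * s = z' (i + 1) * t - z' i * s) →
      ∀ j, j ≤ m + 1 → z j = z' j) :=
  stmt1_general F R H s t hli hs ht hbpf m
end

section
/- Let ⃗e = (e_1 ≤ … ≤ e_k) be a splitting sequence and fix an index range: suppose there exist indices i and k' ≥ 2 with i−1+k' ≤ k such that e_i = … = e_{i−1+k'} = a. For 1 ≤ l ≤ ⌊k'/2⌋ define ⃗e' by e'_j = a−1 for i ≤ j ≤ i+l−1, e'_j = a+1 for i+k'−l ≤ j ≤ i−1+k', and e'_j = e_j otherwise. Then u(⃗e') − u(⃗e) = l², where u(⃗e) = Σ_{1 ≤ i < j ≤ k} max{0, e_j − e_i − 1}. -/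
/-!
Let `δ = e' - e`, which is `+1` on the `l` raised entries, `-1` on the `l` lowered ones and `0`
elsewhere, so `∑ δ = 0`. Because of the gaps of size at least two around the block, for a pair
`i < j` with one index outside the block the argument of `max 0 (e_j - e_i - 1)` stays
nonnegative, so the summand changes by exactly `δ_j - δ_i`; summed over such pairs this is a
multiple of `∑ δ = 0`. Inside the block, only the `l²` pairs (lowered, raised) change, each by `1`.
-/

/-- The invariant `u(⃗e) = ∑_{1 ≤ i < j ≤ k} max {0, e_j - e_i - 1}` of a splitting
sequence, indexed over positions `1, …, k`. -/
def uInv (k : ℕ) (e : ℕ → ℤ) : ℤ :=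
  ∑ i ∈ Finset.Icc 1 k, ∑ j ∈ Finset.Icc 1 k, if i < j then max 0 (e j - e i - 1) else 0

open Finset

namespace SplittingSequence

def pairTerm (e : ℕ → ℤ) (i j : ℕ) : ℤ :=
  if i < j then max 0 (e j - e i - 1) else 0

lemma uInv_sub_uInv (k : ℕ) (e e' : ℕ → ℤ) :
    uInv k e' - uInv k e =
      ∑ i ∈ Icc 1 k, ∑ j ∈ Icc 1 k, (pairTerm e' i j - pairTerm e i j) := by
  simp only [uInv, pairTerm, ← sum_sub_distrib]

def indIcc (α β x : ℕ) : ℤ :=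
  if x ∈ Icc α β then 1 else 0

lemma sum_indIcc {k α β : ℕ} (hα : 1 ≤ α) (hβ : β ≤ k) :
    ∑ x ∈ Icc 1 k, indIcc α β x = ((β + 1 - α : ℕ) : ℤ) := by
  unfold indIcc
  rw [sum_ite_mem, inter_eq_right.mpr (Icc_subset_Icc hα hβ)]
  simp

lemma le_sub_two_of_mem_Icc {k i₀ : ℕ} {a : ℤ} {e : ℕ → ℤ}
    (hmono : ∀ i j, 1 ≤ i → i ≤ j → j ≤ k → e i ≤ e j) (hi₀k : i₀ - 1 ≤ k)
    (hleft : 1 < i₀ → e (i₀ - 1) < a - 1) : ∀ x ∈ Icc 1 (i₀ - 1), e x ≤ a - 2 := by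
  intro x hx
  rw [mem_Icc] at hx
  have := hmono x (i₀ - 1) hx.1 hx.2 (by omega)
  have := hleft (by omega)
  omega

lemma add_two_le_of_mem_Icc {k m : ℕ} {a : ℤ} {e : ℕ → ℤ}
    (hmono : ∀ i j, 1 ≤ i → i ≤ j → j ≤ k → e i ≤ e j) (hm : 1 ≤ m)
    (hright : m ≤ k → a + 1 < e m) : ∀ x ∈ Icc m k, a + 2 ≤ e x := by
  intro x hx
  rw [mem_Icc] at hx
  have := hmono m x hm hx.1 hx.2
  have := hright (by omega)
  omega

section Block

variable {k i₀ k' l : ℕ} {a : ℤ} {e e' : ℕ → ℤ}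

local notation "lowered" => indIcc i₀ (i₀ + l - 1)
local notation "raised" => indIcc (i₀ + k' - l) (i₀ - 1 + k')

-- Both sides vanish for `i ≥ j`, as the left part < lowered < raised < the right part.
lemma pairTerm_sub_pairTerm (hi₀ : 1 ≤ i₀) (hl2 : 2 * l ≤ k')
    (hL : ∀ x ∈ Icc 1 (i₀ - 1), e x ≤ a - 2)
    (hB : ∀ x, i₀ ≤ x → x ≤ i₀ - 1 + k' → e x = a)
    (hR : ∀ x ∈ Icc (i₀ + k') k, a + 2 ≤ e x)
    (he' : ∀ j, e' j =
      if i₀ ≤ j ∧ j ≤ i₀ + l - 1 then a - 1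
      else if i₀ + k' - l ≤ j ∧ j ≤ i₀ - 1 + k' then a + 1
      else e j)
    {i j : ℕ} (hi : i ∈ Icc 1 k) (hj : j ∈ Icc 1 k) :
    pairTerm e' i j - pairTerm e i j =
      lowered i * raised j + indIcc 1 (i₀ - 1) i * (raised j - lowered j)
        - (raised i - lowered i) * indIcc (i₀ + k') k j := by
  have hclass : ∀ x ∈ Icc 1 k, (x ≤ i₀ - 1 ∧ e x ≤ a - 2) ∨
      (i₀ ≤ x ∧ x ≤ i₀ - 1 + k' ∧ e x = a) ∨ (i₀ + k' ≤ x ∧ a + 2 ≤ e x) := by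
    intro x hx
    rw [mem_Icc] at hx
    by_cases h1 : x ≤ i₀ - 1
    · exact .inl ⟨h1, hL x (mem_Icc.mpr ⟨hx.1, h1⟩)⟩
    by_cases h2 : x ≤ i₀ - 1 + k'
    · exact .inr (.inl ⟨by omega, h2, hB x (by omega) h2⟩)
    · exact .inr (.inr ⟨by omega, hR x (mem_Icc.mpr ⟨by omega, hx.2⟩)⟩)
  have hci := hclass i hi
  have hcj := hclass j hj
  rw [mem_Icc] at hi hj
  simp only [pairTerm, indIcc, mem_Icc, he']
  split_ifs <;> omega

end Block

end SplittingSequence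

open SplittingSequence in
theorem stmt5_general (k i₀ k' l : ℕ) (a : ℤ) (e e' : ℕ → ℤ)
    (hmono : ∀ i j, 1 ≤ i → i ≤ j → j ≤ k → e i ≤ e j)
    (hi₀ : 1 ≤ i₀) (hik : i₀ - 1 + k' ≤ k)
    (hblock : ∀ j, i₀ ≤ j → j ≤ i₀ - 1 + k' → e j = a)
    (hleft : 1 < i₀ → e (i₀ - 1) < a - 1)
    (hright : i₀ + k' ≤ k → a + 1 < e (i₀ + k'))
    (hl2 : 2 * l ≤ k')
    (he' : ∀ j, e' j =
      if i₀ ≤ j ∧ j ≤ i₀ + l - 1 then a - 1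
      else if i₀ + k' - l ≤ j ∧ j ≤ i₀ - 1 + k' then a + 1
      else e j) :
    uInv k e' - uInv k e = (l : ℤ) ^ 2 := by
  have hL := le_sub_two_of_mem_Icc hmono (by omega) hleft
  have hR := add_two_le_of_mem_Icc hmono (by omega : 1 ≤ i₀ + k') hright
  rw [uInv_sub_uInv, sum_congr rfl fun i hi => sum_congr rfl fun j hj =>
    pairTerm_sub_pairTerm hi₀ hl2 hL hblock hR he' hi hj]
  simp only [sum_add_distrib, sum_sub_distrib, ← mul_sum, ← sum_mul]
  have hlowered : ∑ x ∈ Icc 1 k, indIcc i₀ (i₀ + l - 1) x = l := by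
    rw [sum_indIcc hi₀ (by omega)]
    congr 1
    omega
  have hraised : ∑ x ∈ Icc 1 k, indIcc (i₀ + k' - l) (i₀ - 1 + k') x = l := by
    rw [sum_indIcc (by omega) hik]
    congr 1
    omega
  rw [hlowered, hraised]
  ring

/-- Let `⃗e` be a nondecreasing splitting sequence with a constant block
`e_i = ⋯ = e_{i-1+k'} = a` (with `e_{i-1} < a - 1` and `e_{i+k'} > a + 1` at the boundary).
For `1 ≤ l ≤ ⌊k'/2⌋` let `⃗e'` lower the first `l` entries of the block to `a - 1` and raise
the last `l` entries to `a + 1`.  Then `u(⃗e') - u(⃗e) = l²`. -/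
theorem stmt5 (k i₀ k' l : ℕ) (a : ℤ) (e e' : ℕ → ℤ)
    (hmono : ∀ i j, 1 ≤ i → i ≤ j → j ≤ k → e i ≤ e j)
    (hi₀ : 1 ≤ i₀) (hk' : 2 ≤ k') (hik : i₀ - 1 + k' ≤ k)
    (hblock : ∀ j, i₀ ≤ j → j ≤ i₀ - 1 + k' → e j = a)
    (hleft : 1 < i₀ → e (i₀ - 1) < a - 1)
    (hright : i₀ + k' ≤ k → a + 1 < e (i₀ + k'))
    (hl : 1 ≤ l) (hl2 : 2 * l ≤ k')
    (he' : ∀ j, e' j =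
      if i₀ ≤ j ∧ j ≤ i₀ + l - 1 then a - 1
      else if i₀ + k' - l ≤ j ∧ j ≤ i₀ - 1 + k' then a + 1
      else e j) :
    uInv k e' - uInv k e = (l : ℤ) ^ 2 :=
  stmt5_general k i₀ k' l a e e' hmono hi₀ hik hblock hleft hright hl2 he'
end

section
/- Let ⃗e ≤ ⃗e' be two nondecreasing integer sequences of length k with equal sums (dominance order: all partial sums of ⃗e are ≤ those of ⃗e'). Suppose e'_i < 0 for i < c, e'_i = 0 for c ≤ i ≤ k (so ⃗e' ends in k−c+1 zeros and is a 'type I' balanced-plus-balanced sequence with (a,v)=(0,0)), suppose e'_1 < −2, and suppose e_k ≥ 1 and the number of indices with e'_i = 0 is r+1 ≥ 2. Then for every n with k−r ≤ n < k one has Σ_{i=1}^n e_i < Σ_{i=1}^n e'_i (strict inequality). -/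
/-- combinatorial core of Proposition 4.  Let `⃗e ≤ ⃗e'` in the dominance
order, both nondecreasing of length `k` with equal total sums, where `⃗e'` is of type I:
`e'_i < 0` for `i < k - r`, `e'_i = 0` for `k - r ≤ i ≤ k` (so `r + 1 ≥ 2` zeros), and
`e'_1 < -2`.  If moreover `e_k ≥ 1`, then for every `n` with `k - r ≤ n < k` the dominance
inequality is strict: `∑_{i=1}^n e_i < ∑_{i=1}^n e'_i`. -/
theorem stmt8 (k r : ℕ) (e e' : ℕ → ℤ)
    (hr : 1 ≤ r) (hrk : r + 2 ≤ k)
    (hmono : ∀ i j, 1 ≤ i → i ≤ j → j ≤ k → e i ≤ e j)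
    (hmono' : ∀ i j, 1 ≤ i → i ≤ j → j ≤ k → e' i ≤ e' j)
    (hdom : ∀ l ∈ Finset.Icc 1 k, ∑ i ∈ Finset.Icc 1 l, e i ≤ ∑ i ∈ Finset.Icc 1 l, e' i)
    (hsum : ∑ i ∈ Finset.Icc 1 k, e i = ∑ i ∈ Finset.Icc 1 k, e' i)
    (hneg : ∀ i, 1 ≤ i → i < k - r → e' i < 0)
    (hzero : ∀ i, k - r ≤ i → i ≤ k → e' i = 0)
    (h1 : e' 1 < -2) (hek : 1 ≤ e k) :
    ∀ n, k - r ≤ n → n < k →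
      ∑ i ∈ Finset.Icc 1 n, e i < ∑ i ∈ Finset.Icc 1 n, e' i := by
  intro n hn1 hn2
  by_contra hcon
  push_neg at hcon
  have hle : ∑ i ∈ Finset.Icc 1 n, e i ≤ ∑ i ∈ Finset.Icc 1 n, e' i :=
    hdom n (Finset.mem_Icc.mpr ⟨by omega, by omega⟩)
  have heq : ∑ i ∈ Finset.Icc 1 n, e i = ∑ i ∈ Finset.Icc 1 n, e' i := le_antisymm hle hcon
  -- splitting lemma
  have hsplit : ∀ (f : ℕ → ℤ) (a b : ℕ), a ≤ b →
      ∑ i ∈ Finset.Icc 1 b, f i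
        = ∑ i ∈ Finset.Icc 1 a, f i + ∑ i ∈ Finset.Icc (a + 1) b, f i := by
    intro f a b hab
    rw [show Finset.Icc 1 b = Finset.Ioc 0 b by rw [← Finset.Icc_add_one_left_eq_Ioc, zero_add],
        show Finset.Icc 1 a = Finset.Ioc 0 a by rw [← Finset.Icc_add_one_left_eq_Ioc, zero_add],
        show Finset.Icc (a + 1) b = Finset.Ioc a b by rw [← Finset.Icc_add_one_left_eq_Ioc],
        Finset.sum_Ioc_consecutive f (Nat.zero_le a) hab]
  -- the tail of e' is zero
  have hz' : ∑ i ∈ Finset.Icc (n + 1) k, e' i = 0 := by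
    apply Finset.sum_eq_zero
    intro i hi
    rw [Finset.mem_Icc] at hi
    exact hzero i (by omega) (by omega)
  -- hence the tail of e sums to zero
  have htail : ∑ i ∈ Finset.Icc (n + 1) k, e i = 0 := by
    have h1' := hsplit e n k (by omega)
    have h2' := hsplit e' n k (by omega)
    linarith
  -- e (n+1) ≤ -1
  have hen1 : e (n + 1) ≤ -1 := by
    by_contra h
    push_neg at h
    have hnn : ∀ i ∈ Finset.Icc (n + 1) k, i ∉ ({k} : Finset ℕ) → (0 : ℤ) ≤ e i := by
      intro i hi _
      rw [Finset.mem_Icc] at hi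
      have := hmono (n + 1) i (by omega) hi.1 hi.2
      omega
    have hsub : ({k} : Finset ℕ) ⊆ Finset.Icc (n + 1) k := by
      intro i hi
      rw [Finset.mem_singleton] at hi
      rw [Finset.mem_Icc]
      omega
    have := Finset.sum_le_sum_of_subset_of_nonneg hsub hnn
    rw [Finset.sum_singleton, htail] at this
    omega
  -- the middle block of e is strictly negative
  have hmid : ∑ i ∈ Finset.Icc (k - r) n, e i < 0 := by
    have : ∑ i ∈ Finset.Icc (k - r) n, e i < ∑ i ∈ Finset.Icc (k - r) n, (0 : ℤ) := by
      apply Finset.sum_lt_sum_of_nonempty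
      · exact Finset.nonempty_Icc.mpr hn1
      · intro i hi
        rw [Finset.mem_Icc] at hi
        have := hmono i (n + 1) (by omega) (by omega) (by omega)
        omega
    simpa using this
  -- dominance at k - r - 1
  set m := k - r - 1 with hm
  have hdm : ∑ i ∈ Finset.Icc 1 m, e i ≤ ∑ i ∈ Finset.Icc 1 m, e' i :=
    hdom m (Finset.mem_Icc.mpr ⟨by omega, by omega⟩)
  have hm1 : m + 1 = k - r := by omega
  have hse := hsplit e m n (by omega)
  have hse' := hsplit e' m n (by omega)
  rw [hm1] at hse hse'
  have hz2 : ∑ i ∈ Finset.Icc (k - r) n, e' i = 0 := by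
    apply Finset.sum_eq_zero
    intro i hi
    rw [Finset.mem_Icc] at hi
    exact hzero i hi.1 (by omega)
  linarith
end

section
/- In the setting of Proposition 5.2's proof: let C be a smooth projective curve, M base point free with h^0(M)=2, L a line bundle with h^0(L)=r+1, and suppose 2·h^0(K−L−M) − h^0(K−L−2M) = h^0(K−L) (a numerical condition equivalent to dim(s·H^0(K−L−M)+t·H^0(K−L−M)) = h^0(K−L)). Then s·H^0(C,K−L−M) + t·H^0(C,K−L−M) = H^0(C,K−L), and consequently the image of the Petri map of L is contained in the image of the Petri map of L+M: im(μ_L) ⊆ im(μ_{L+M}). -/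
/-!
Write `sV` for the image of `V = H⁰(K-L-M)` under multiplication by `s`. Multiplication by a
nonzero section is injective, so `sV` and `tV` both have dimension `h⁰(K-L-M)`, while base point
freeness of the pencil forces `sV ∩ tV ⊆ st·H⁰(K-L-2M)`. Hence
`dim (sV + tV) ≥ 2 h⁰(K-L-M) - h⁰(K-L-2M) = h⁰(K-L)`, and `sV + tV ⊆ H⁰(K-L)` is an equality.
Then every product `x (s y₁ + t y₂) = (s x) y₁ + (t x) y₂` with `x ∈ H⁰(L)` lies in
`H⁰(L+M)·H⁰(K-L-M)`.
-/

open Module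

namespace Submodule

variable {F R : Type*} [Field F] [CommRing R] [Algebra F R]

theorem finrank_map_mulLeft [IsDomain R] {c : R} (hc : c ≠ 0) (V : Submodule F R) :
    finrank F (V.map (LinearMap.mulLeft F c)) = finrank F V :=
  (LinearEquiv.finrank_eq (V.equivMapOfInjective _ (mul_right_injective₀ hc))).symm

theorem map_mulLeft_inf_map_mulLeft_le {s t : R} {V W : Submodule F R}
    (hdiv : ∀ y ∈ V, ∀ z ∈ V, s * y = t * z → ∃ w ∈ W, y = t * w ∧ z = s * w) :
    V.map (LinearMap.mulLeft F s) ⊓ V.map (LinearMap.mulLeft F t) ≤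
      W.map (LinearMap.mulLeft F (s * t)) := by
  rintro x ⟨⟨y, hy, rfl⟩, ⟨z, hz, hzy⟩⟩
  obtain ⟨w, hw, rfl, -⟩ := hdiv y hy z hz hzy.symm
  exact ⟨w, hw, by simp only [LinearMap.mulLeft_apply]; ring⟩

theorem map_mulLeft_sup_map_mulLeft_eq [IsDomain R] {s t : R} (hs : s ≠ 0) (ht : t ≠ 0)
    {U V W : Submodule F R} [FiniteDimensional F U] [FiniteDimensional F W]
    (hmul : ∀ y ∈ V, s * y ∈ U ∧ t * y ∈ U)
    (hdiv : ∀ y ∈ V, ∀ z ∈ V, s * y = t * z → ∃ w ∈ W, y = t * w ∧ z = s * w)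
    (hdim : finrank F U + finrank F W ≤ 2 * finrank F V) :
    V.map (LinearMap.mulLeft F s) ⊔ V.map (LinearMap.mulLeft F t) = U := by
  set A := V.map (LinearMap.mulLeft F s)
  set B := V.map (LinearMap.mulLeft F t)
  have hAU : A ≤ U := by
    rintro _ ⟨y, hy, rfl⟩
    exact (hmul y hy).1
  have hBU : B ≤ U := by
    rintro _ ⟨y, hy, rfl⟩
    exact (hmul y hy).2
  have := finiteDimensional_of_le hAU
  have := finiteDimensional_of_le hBU
  have hinf : finrank F ↥(A ⊓ B) ≤ finrank F W := by
    rw [← finrank_map_mulLeft (mul_ne_zero hs ht) W]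
    exact finrank_mono (map_mulLeft_inf_map_mulLeft_le hdiv)
  have hsup_inf := finrank_sup_add_finrank_inf_eq A B
  rw [finrank_map_mulLeft hs, finrank_map_mulLeft ht] at hsup_inf
  exact eq_of_le_of_finrank_le (sup_le hAU hBU) (by omega)

theorem mul_le_mul_of_le_sup_map_mulLeft {s t : R} {X Y U V : Submodule F R}
    (hmul : ∀ x ∈ X, s * x ∈ Y ∧ t * x ∈ Y)
    (hU : U ≤ V.map (LinearMap.mulLeft F s) ⊔ V.map (LinearMap.mulLeft F t)) :
    X * U ≤ Y * V := by
  refine mul_le.mpr fun x hx u hu ↦ ?_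
  obtain ⟨_, ⟨y₁, hy₁, rfl⟩, _, ⟨y₂, hy₂, rfl⟩, rfl⟩ := mem_sup.mp (hU hu)
  have hexpand : x * (s * y₁ + t * y₂) = (s * x) * y₁ + (t * x) * y₂ := by ring
  simp only [LinearMap.mulLeft_apply, hexpand]
  exact add_mem (mul_mem_mul (hmul x hx).1 hy₁) (mul_mem_mul (hmul x hx).2 hy₂)

end Submodule

theorem stmt13_general (F R : Type*) [Field F] [CommRing R] [IsDomain R] [Algebra F R]
    (H0L H0KL H0LM H0KLM H0KL2M : Submodule F R)
    [FiniteDimensional F H0KL] [FiniteDimensional F H0KL2M]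
    (s t : R)
    (hli : LinearIndependent F ![s, t])
    (hmul₁ : ∀ y ∈ H0KLM, s * y ∈ H0KL ∧ t * y ∈ H0KL)
    (hmulL : ∀ x ∈ H0L, s * x ∈ H0LM ∧ t * x ∈ H0LM)
    (hbpf : ∀ y ∈ H0KLM, ∀ z ∈ H0KLM, s * y = t * z →
      ∃ w ∈ H0KL2M, y = t * w ∧ z = s * w)
    (hnum : 2 * Module.finrank F H0KLM =
      Module.finrank F H0KL + Module.finrank F H0KL2M) :
    (H0KLM.map (LinearMap.mulLeft F s) ⊔ H0KLM.map (LinearMap.mulLeft F t) = H0KL) ∧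
      H0L * H0KL ≤ H0LM * H0KLM := by
  have hs : s ≠ 0 := by simpa using hli.ne_zero 0
  have ht : t ≠ 0 := by simpa using hli.ne_zero 1
  have hsup := Submodule.map_mulLeft_sup_map_mulLeft_eq hs ht hmul₁ hbpf hnum.ge
  exact ⟨hsup, Submodule.mul_le_mul_of_le_sup_map_mulLeft hmulL hsup.ge⟩

/-- core of the proof of Proposition 5.2.  Section-ring model: `s, t` is a
basis of `H⁰(M)` for a base point free pencil `M` (base point freeness recorded by the
divisibility property `hbpf`), and the `F`-subspaces of the integral section ring `R` are
`H0L = H⁰(L)`, `H0KL = H⁰(K-L)`, `H0LM = H⁰(L+M)`, `H0KLM = H⁰(K-L-M)`,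
`H0KL2M = H⁰(K-L-2M)`.  If `2 h⁰(K-L-M) - h⁰(K-L-2M) = h⁰(K-L)` then
`s·H⁰(K-L-M) + t·H⁰(K-L-M) = H⁰(K-L)`, and consequently the image of the Petri map of `L`
is contained in that of `L+M`: `im μ_L = H⁰(L)·H⁰(K-L) ⊆ H⁰(L+M)·H⁰(K-L-M) = im μ_{L+M}`. -/
theorem stmt13 (F R : Type*) [Field F] [CommRing R] [IsDomain R] [Algebra F R]
    (H0M H0L H0KL H0LM H0KLM H0KL2M : Submodule F R)
    [FiniteDimensional F H0KL] [FiniteDimensional F H0KLM] [FiniteDimensional F H0KL2M]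
    (s t : R) (hs : s ∈ H0M) (ht : t ∈ H0M)
    (hli : LinearIndependent F ![s, t]) (hspan : Submodule.span F {s, t} = H0M)
    (r : ℕ) (h0L : Module.finrank F H0L = r + 1)
    (hmul₁ : ∀ y ∈ H0KLM, s * y ∈ H0KL ∧ t * y ∈ H0KL)
    (hmul₂ : ∀ y ∈ H0KL2M, s * y ∈ H0KLM ∧ t * y ∈ H0KLM)
    (hmulL : ∀ x ∈ H0L, s * x ∈ H0LM ∧ t * x ∈ H0LM)
    (hbpf : ∀ y ∈ H0KLM, ∀ z ∈ H0KLM, s * y = t * z →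
      ∃ w ∈ H0KL2M, y = t * w ∧ z = s * w)
    (hnum : 2 * Module.finrank F H0KLM =
      Module.finrank F H0KL + Module.finrank F H0KL2M) :
    (H0KLM.map (LinearMap.mulLeft F s) ⊔ H0KLM.map (LinearMap.mulLeft F t) = H0KL) ∧
      H0L * H0KL ≤ H0LM * H0KLM :=
  stmt13_general F R H0L H0KL H0LM H0KLM H0KL2M s t hli hmul₁ hmulL hbpf hnum
end

section
/- Let ⃗e' ≤ ⃗e be nondecreasing integer sequences of length k with equal sum, where ≤ is the dominance order (all initial partial sums of ⃗e' are ≤ those of ⃗e). Then u(⃗e') ≥ u(⃗e), where u(⃗f) = Σ_{1≤i<j≤k} max{0, f_j − f_i − 1}, with equality iff ⃗e' = ⃗e. -/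
def partialSum (f : ℕ → ℤ) (l : ℕ) : ℤ := ∑ i ∈ Finset.Icc 1 l, f i

def DominanceLE (k : ℕ) (e' e : ℕ → ℤ) : Prop :=
  (∀ l ∈ Finset.Icc 1 k, partialSum e' l ≤ partialSum e l) ∧ partialSum e' k = partialSum e k

def dominanceGap (k : ℕ) (e' e : ℕ → ℤ) : ℤ :=
  ∑ l ∈ Finset.Icc 1 k, (partialSum e l - partialSum e' l)

def transfer (e : ℕ → ℤ) (p q : ℕ) : ℕ → ℤ := e - Pi.single p 1 + Pi.single q 1

def pairWeight (e : ℕ → ℤ) (i j : ℕ) : ℤ := if i < j then max 0 (e j - e i - 1) else 0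

lemma partialSum_succ (f : ℕ → ℤ) (l : ℕ) : partialSum f (l + 1) = partialSum f l + f (l + 1) :=
  Finset.sum_Icc_succ_top (by omega) f

lemma uInv_eq_sum_pairWeight (k : ℕ) (e : ℕ → ℤ) :
    uInv k e = ∑ i ∈ Finset.Icc 1 k, ∑ j ∈ Finset.Icc 1 k, pairWeight e i j :=
  rfl

lemma uInv_congr {k : ℕ} {e e' : ℕ → ℤ} (h : ∀ i ∈ Finset.Icc 1 k, e' i = e i) :
    uInv k e' = uInv k e :=
  Finset.sum_congr rfl fun i hi => Finset.sum_congr rfl fun j hj => by rw [h i hi, h j hj]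

lemma dominanceGap_nonneg {k : ℕ} {e e' : ℕ → ℤ} (hdom : DominanceLE k e' e) :
    0 ≤ dominanceGap k e' e :=
  Finset.sum_nonneg fun l hl => sub_nonneg.2 (hdom.1 l hl)

lemma Finset.sum_sum_eq_add_pair {α M : Type*} [DecidableEq α] [AddCommMonoid M]
    {s : Finset α} {p q : α} (hp : p ∈ s) (hq : q ∈ s) (hpq : p ≠ q) (f : α → α → M) :
    ∑ i ∈ s, ∑ j ∈ s, f i j =
      ∑ i ∈ (s.erase p).erase q, ∑ j ∈ (s.erase p).erase q, f i j
        + ∑ i ∈ (s.erase p).erase q, (f i p + f i q + f p i + f q i)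
        + (f p p + f p q + f q p + f q q) := by
  set t := (s.erase p).erase q
  have hqt : q ∉ t := Finset.notMem_erase _ _
  have hpt : p ∉ insert q t := by simp [t, hpq]
  have hs : s = insert p (insert q t) := by
    rw [Finset.insert_erase (Finset.mem_erase.2 ⟨hpq.symm, hq⟩), Finset.insert_erase hp]
  rw [hs]
  simp only [Finset.sum_insert hpt, Finset.sum_insert hqt, Finset.sum_add_distrib]
  abel

section transfer

variable (e : ℕ → ℤ) {p q : ℕ}

lemma transfer_apply (i : ℕ) :
    transfer e p q i = e i - (if i = p then 1 else 0) + (if i = q then 1 else 0) := by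
  simp [transfer, Pi.single_apply]

lemma partialSum_transfer (hp : 1 ≤ p) (hq : 1 ≤ q) (l : ℕ) :
    partialSum (transfer e p q) l =
      partialSum e l - (if p ≤ l then 1 else 0) + (if q ≤ l then 1 else 0) := by
  simp [partialSum, transfer, Finset.sum_add_distrib, Finset.sum_sub_distrib,
    Finset.sum_pi_single', hp, hq]

end transfer

section transferBounds

variable {k : ℕ} {e e' : ℕ → ℤ} {p q : ℕ}

lemma pairWeight_cross_le_transfer (hmono : MonotoneOn e (Set.Icc 1 k)) (hp1 : 1 ≤ p)
    (hpq : p < q) (hqk : q ≤ k) {i : ℕ} (hi : i ∈ Set.Icc 1 k) (hip : i ≠ p) (hiq : i ≠ q) :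
    pairWeight e i p + pairWeight e i q + pairWeight e p i + pairWeight e q i ≤
      pairWeight (transfer e p q) i p + pairWeight (transfer e p q) i q +
        pairWeight (transfer e p q) p i + pairWeight (transfer e p q) q i := by
  have hp : p ∈ Set.Icc 1 k := ⟨hp1, by omega⟩
  have hq : q ∈ Set.Icc 1 k := ⟨by omega, hqk⟩
  have hip' : i ≤ p → e i ≤ e p := hmono hi hp
  have hpi' : p ≤ i → e p ≤ e i := hmono hp hi
  have hiq' : i ≤ q → e i ≤ e q := hmono hi hq
  have hqi' : q ≤ i → e q ≤ e i := hmono hq hi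
  have hpq' : e p ≤ e q := hmono hp hq hpq.le
  simp only [pairWeight, transfer_apply, hip, hiq, hpq.ne, hpq.ne', ↓reduceIte]
  split_ifs <;> omega

lemma pairWeight_corner_lt_transfer (hmono : MonotoneOn e (Set.Icc 1 k)) (hp1 : 1 ≤ p)
    (hpq : p < q) (hqk : q ≤ k) :
    pairWeight e p p + pairWeight e p q + pairWeight e q p + pairWeight e q q <
      pairWeight (transfer e p q) p p + pairWeight (transfer e p q) p q +
        pairWeight (transfer e p q) q p + pairWeight (transfer e p q) q q := by
  have hepq : e p ≤ e q := hmono ⟨hp1, by omega⟩ ⟨by omega, hqk⟩ hpq.le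
  simp only [pairWeight, transfer_apply, hpq, hpq.ne, hpq.ne', hpq.not_gt, lt_irrefl,
    ↓reduceIte]
  omega

lemma uInv_lt_uInv_transfer (hmono : MonotoneOn e (Set.Icc 1 k)) (hp1 : 1 ≤ p) (hpq : p < q)
    (hqk : q ≤ k) : uInv k e < uInv k (transfer e p q) := by
  have hp : p ∈ Finset.Icc 1 k := Finset.mem_Icc.2 ⟨hp1, by omega⟩
  have hq : q ∈ Finset.Icc 1 k := Finset.mem_Icc.2 ⟨by omega, hqk⟩
  simp only [uInv_eq_sum_pairWeight, Finset.sum_sum_eq_add_pair hp hq hpq.ne]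
  set t := ((Finset.Icc 1 k).erase p).erase q
  have hmem : ∀ i ∈ t, i ∈ Set.Icc 1 k ∧ i ≠ p ∧ i ≠ q := fun i hi => by
    simp only [t, Finset.mem_erase, Finset.mem_Icc] at hi
    exact ⟨hi.2.2, hi.2.1, hi.1⟩
  have hfixed : ∀ i ∈ t, transfer e p q i = e i := fun i hi => by
    simp [transfer_apply, (hmem i hi).2.1, (hmem i hi).2.2]
  have hblock : ∑ i ∈ t, ∑ j ∈ t, pairWeight (transfer e p q) i j =
      ∑ i ∈ t, ∑ j ∈ t, pairWeight e i j :=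
    Finset.sum_congr rfl fun i hi => Finset.sum_congr rfl fun j hj => by
      simp only [pairWeight, hfixed i hi, hfixed j hj]
  have hcross := Finset.sum_le_sum fun i hi =>
    pairWeight_cross_le_transfer hmono hp1 hpq hqk (hmem i hi).1 (hmem i hi).2.1 (hmem i hi).2.2
  have hcorner := pairWeight_corner_lt_transfer hmono hp1 hpq hqk
  linarith

lemma monotoneOn_transfer (hmono : MonotoneOn e (Set.Icc 1 k)) (hpq : p < q)
    (hp : ∀ i, 1 ≤ i → i < p → e i < e p) (hq : ∀ j, q < j → j ≤ k → e q < e j) :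
    MonotoneOn (transfer e p q) (Set.Icc 1 k) := by
  intro i hi j hj hij
  have hle := hmono hi hj hij
  have hjp : j = p → i < p → e i < e j := by rintro rfl; exact hp i hi.1
  have hiq : i = q → q < j → e i < e j := by rintro rfl h; exact hq j h hj.2
  simp only [transfer_apply]
  split_ifs <;> omega

lemma dominanceLE_transfer (hdom : DominanceLE k e' e) (hp1 : 1 ≤ p) (hpq : p < q) (hqk : q ≤ k)
    (hstrict : ∀ l, p ≤ l → l < q → partialSum e' l < partialSum e l) :
    DominanceLE k e' (transfer e p q) := by
  refine ⟨fun l hl => ?_, ?_⟩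
  · have := hdom.1 l hl
    have := hstrict l
    rw [partialSum_transfer e hp1 (by omega)]
    split_ifs <;> omega
  · rw [partialSum_transfer e hp1 (by omega), if_pos (by omega), if_pos hqk, hdom.2]
    ring

lemma dominanceGap_transfer_lt (hp1 : 1 ≤ p) (hpq : p < q) (hpk : p ≤ k) :
    dominanceGap k e' (transfer e p q) < dominanceGap k e' e := by
  refine Finset.sum_lt_sum (fun l _ => ?_) ⟨p, Finset.mem_Icc.2 ⟨hp1, hpk⟩, ?_⟩
  · rw [partialSum_transfer e hp1 (by omega)]
    split_ifs <;> omega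
  · rw [partialSum_transfer e hp1 (by omega), if_pos le_rfl, if_neg (by omega)]
    omega

end transferBounds

section dominance

variable {k : ℕ} {e e' : ℕ → ℤ}

lemma exists_first_deficit (hmono' : MonotoneOn e' (Set.Icc 1 k))
    (hdom : ∀ l ∈ Finset.Icc 1 k, partialSum e' l ≤ partialSum e l)
    (hne : ∃ i ∈ Finset.Icc 1 k, e' i ≠ e i) :
    ∃ p, 1 ≤ p ∧ p ≤ k ∧ partialSum e' p < partialSum e p ∧
      ∀ i, 1 ≤ i → i < p → e i < e p := by
  classical
  obtain ⟨p, ⟨hp, hpne⟩, hmin⟩ : ∃ p, (p ∈ Finset.Icc 1 k ∧ e' p ≠ e p) ∧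
      ∀ i < p, ¬(i ∈ Finset.Icc 1 k ∧ e' i ≠ e i) :=
    ⟨Nat.find hne, Nat.find_spec hne, fun _ => Nat.find_min hne⟩
  obtain ⟨hp1, hpk⟩ := Finset.mem_Icc.1 hp
  have hagree : ∀ i, 1 ≤ i → i < p → e' i = e i := fun i h1 h2 =>
    not_not.1 fun h => hmin i h2 ⟨Finset.mem_Icc.2 ⟨h1, by omega⟩, h⟩
  obtain ⟨m, rfl⟩ : ∃ m, p = m + 1 := ⟨p - 1, by omega⟩
  have hbefore : partialSum e' m = partialSum e m := Finset.sum_congr rfl fun i hi =>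
    hagree i (Finset.mem_Icc.1 hi).1 (Nat.lt_succ_of_le (Finset.mem_Icc.1 hi).2)
  have hdom_p := hdom (m + 1) hp
  rw [partialSum_succ, partialSum_succ, hbefore] at hdom_p
  have hlt : e' (m + 1) < e (m + 1) := lt_of_le_of_ne (by linarith) hpne
  refine ⟨m + 1, hp1, hpk, ?_, fun i h1 h2 => ?_⟩
  · rw [partialSum_succ, partialSum_succ, hbefore]
    linarith
  calc e i = e' i := (hagree i h1 h2).symm
    _ ≤ e' (m + 1) := hmono' ⟨h1, by omega⟩ ⟨hp1, hpk⟩ h2.le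
    _ < e (m + 1) := hlt

lemma exists_first_catchup (hmono : MonotoneOn e (Set.Icc 1 k))
    (hmono' : MonotoneOn e' (Set.Icc 1 k)) (hdom : DominanceLE k e' e) {p : ℕ} (hpk : p ≤ k)
    (hlt : partialSum e' p < partialSum e p) :
    ∃ q, p < q ∧ q ≤ k ∧ (∀ l, p ≤ l → l < q → partialSum e' l < partialSum e l) ∧
      ∀ j, q < j → j ≤ k → e q < e j := by
  classical
  have hex : ∃ q, p < q ∧ q ≤ k ∧ partialSum e' q = partialSum e q :=
    ⟨k, lt_of_le_of_ne hpk (by rintro rfl; exact hlt.ne hdom.2), le_rfl, hdom.2⟩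
  obtain ⟨q, ⟨hpq, hqk, hcatch⟩, hmin⟩ : ∃ q, (p < q ∧ q ≤ k ∧
      partialSum e' q = partialSum e q) ∧ ∀ l < q, ¬(p < l ∧ l ≤ k ∧
      partialSum e' l = partialSum e l) :=
    ⟨Nat.find hex, Nat.find_spec hex, fun _ => Nat.find_min hex⟩
  have hstrict : ∀ l, p ≤ l → l < q → partialSum e' l < partialSum e l := by
    intro l hpl hlq
    rcases hpl.eq_or_lt with rfl | hpl
    · exact hlt
    · exact lt_of_le_of_ne (hdom.1 l (Finset.mem_Icc.2 ⟨by omega, by omega⟩))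
        fun h => hmin l hlq ⟨hpl, by omega, h⟩
  obtain ⟨m, rfl⟩ : ∃ m, q = m + 1 := ⟨q - 1, by omega⟩
  have hjump : e (m + 1) < e' (m + 1) := by
    have := hstrict m (by omega) (by omega)
    rw [partialSum_succ, partialSum_succ] at hcatch
    linarith
  refine ⟨m + 1, hpq, hqk, hstrict, fun j hj hjk => ?_⟩
  have hnext : e' (m + 2) ≤ e (m + 2) := by
    have := hdom.1 (m + 2) (Finset.mem_Icc.2 ⟨by omega, by omega⟩)
    rw [partialSum_succ e' (m + 1), partialSum_succ e (m + 1), hcatch] at this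
    linarith
  calc e (m + 1) < e' (m + 1) := hjump
    _ ≤ e' (m + 2) := hmono' ⟨by omega, hqk⟩ ⟨by omega, by omega⟩ (by omega)
    _ ≤ e (m + 2) := hnext
    _ ≤ e j := hmono ⟨by omega, by omega⟩ ⟨by omega, hjk⟩ (by omega)

end dominance

theorem uInv_lt_of_dominanceLE {k : ℕ} {e e' : ℕ → ℤ} (hmono : MonotoneOn e (Set.Icc 1 k))
    (hmono' : MonotoneOn e' (Set.Icc 1 k)) (hdom : DominanceLE k e' e)
    (hne : ∃ i ∈ Finset.Icc 1 k, e' i ≠ e i) : uInv k e < uInv k e' := by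
  obtain ⟨p, hp1, hpk, hlt, hbelow⟩ := exists_first_deficit hmono' hdom.1 hne
  obtain ⟨q, hpq, hqk, hstrict, habove⟩ := exists_first_catchup hmono hmono' hdom hpk hlt
  have hdomE := dominanceLE_transfer hdom hp1 hpq hqk hstrict
  have hgain := uInv_lt_uInv_transfer hmono hp1 hpq hqk
  by_cases hE : ∀ i ∈ Finset.Icc 1 k, e' i = transfer e p q i
  · rwa [uInv_congr hE]
  · push Not at hE
    exact hgain.trans
      (uInv_lt_of_dominanceLE (monotoneOn_transfer hmono hpq hbelow habove) hmono' hdomE hE)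
termination_by (dominanceGap k e' e).toNat
decreasing_by
  exact (Int.toNat_lt_toNat ((dominanceGap_nonneg hdomE).trans_lt
    (dominanceGap_transfer_lt hp1 hpq hpk))).2 (dominanceGap_transfer_lt hp1 hpq hpk)

/-- If `⃗e' ≤ ⃗e` in the dominance order (all initial partial sums of `⃗e'`
at most those of `⃗e`, equal total sums, both nondecreasing of length `k`), then
`u(⃗e') ≥ u(⃗e)`, with equality iff `⃗e' = ⃗e`. -/
theorem stmt19 (k : ℕ) (e e' : ℕ → ℤ)
    (hmono : ∀ i j, 1 ≤ i → i ≤ j → j ≤ k → e i ≤ e j)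
    (hmono' : ∀ i j, 1 ≤ i → i ≤ j → j ≤ k → e' i ≤ e' j)
    (hdom : ∀ l ∈ Finset.Icc 1 k, ∑ i ∈ Finset.Icc 1 l, e' i ≤ ∑ i ∈ Finset.Icc 1 l, e i)
    (hsum : ∑ i ∈ Finset.Icc 1 k, e' i = ∑ i ∈ Finset.Icc 1 k, e i) :
    uInv k e ≤ uInv k e' ∧
      (uInv k e' = uInv k e ↔ ∀ i ∈ Finset.Icc 1 k, e' i = e i) := by
  by_cases heq : ∀ i ∈ Finset.Icc 1 k, e' i = e i
  · exact ⟨(uInv_congr heq).ge, iff_of_true (uInv_congr heq) heq⟩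
  · have hne : ∃ i ∈ Finset.Icc 1 k, e' i ≠ e i := by
      push Not at heq
      exact heq
    have hlt := uInv_lt_of_dominanceLE (fun i hi j hj hij => hmono i j hi.1 hij hj.2)
      (fun i hi j hj hij => hmono' i j hi.1 hij hj.2) ⟨hdom, hsum⟩ hne
    exact ⟨hlt.le, iff_of_false hlt.ne' heq⟩
end
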